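/- If u, v : ℝ² → ℝ are twice continuously differentiable, a ≠ 0 is a real constant, and (u+v)_x/2 = a·sin((u−v)/2) and (u−v)_t/2 = (1/a)·sin((u+v)/2) hold everywhere, then u satisfies the sine-Gordon equation u_xt = sin u. -/

import Mathlib

/-!
Differentiate the first Bäcklund equation in `t` and the second in `x`; substituting the other
equation for the factor produced by the chain rule, `a` and `1 / a` cancel and
`(u + v)_xt / 2 = cos ((u - v) / 2) sin ((u + v) / 2)`,
`(u - v)_tx / 2 = cos ((u + v) / 2) sin ((u - v) / 2)`.
Mixed partials of a `C²` function commute, so adding the two gives `u_xt = sin u` by the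
addition formula for the sine.
-/

noncomputable def px (f : ℝ → ℝ → ℝ) (x t : ℝ) : ℝ :=
  deriv (fun x' => f x' t) x

noncomputable def pt (f : ℝ → ℝ → ℝ) (x t : ℝ) : ℝ :=
  deriv (fun t' => f x t') t

open Function Real

theorem fderiv_apply_const_apply {𝕜 E F G : Type*} [NontriviallyNormedField 𝕜]
    [NormedAddCommGroup E] [NormedSpace 𝕜 E] [NormedAddCommGroup F] [NormedSpace 𝕜 F]
    [NormedAddCommGroup G] [NormedSpace 𝕜 G] {g : E → F →L[𝕜] G} {p : E}
    (hg : DifferentiableAt 𝕜 g p) (v : F) (w : E) :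
    fderiv 𝕜 (fun q => g q v) p w = fderiv 𝕜 g p w v := by
  rw [fderiv_clm_apply hg (differentiableAt_const v)]
  simp

section PartialDerivatives

variable {f : ℝ → ℝ → ℝ} {x t : ℝ}

theorem hasDerivAt_fderiv_px (hf : DifferentiableAt ℝ (uncurry f) (x, t)) :
    HasDerivAt (fun x' => f x' t) (fderiv ℝ (uncurry f) (x, t) (1, 0)) x := by
  exact hf.hasFDerivAt.comp_hasDerivAt x ((hasDerivAt_id x).prodMk (hasDerivAt_const x t))

theorem hasDerivAt_fderiv_pt (hf : DifferentiableAt ℝ (uncurry f) (x, t)) :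
    HasDerivAt (fun t' => f x t') (fderiv ℝ (uncurry f) (x, t) (0, 1)) t := by
  exact hf.hasFDerivAt.comp_hasDerivAt t ((hasDerivAt_const t x).prodMk (hasDerivAt_id t))

theorem px_eq_fderiv (hf : DifferentiableAt ℝ (uncurry f) (x, t)) :
    px f x t = fderiv ℝ (uncurry f) (x, t) (1, 0) :=
  (hasDerivAt_fderiv_px hf).deriv

theorem pt_eq_fderiv (hf : DifferentiableAt ℝ (uncurry f) (x, t)) :
    pt f x t = fderiv ℝ (uncurry f) (x, t) (0, 1) :=
  (hasDerivAt_fderiv_pt hf).deriv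

theorem hasDerivAt_px (hf : DifferentiableAt ℝ (uncurry f) (x, t)) :
    HasDerivAt (fun x' => f x' t) (px f x t) x :=
  px_eq_fderiv hf ▸ hasDerivAt_fderiv_px hf

theorem hasDerivAt_pt (hf : DifferentiableAt ℝ (uncurry f) (x, t)) :
    HasDerivAt (fun t' => f x t') (pt f x t) t :=
  pt_eq_fderiv hf ▸ hasDerivAt_fderiv_pt hf

theorem uncurry_px (hf : Differentiable ℝ (uncurry f)) :
    uncurry (px f) = fun p => fderiv ℝ (uncurry f) p (1, 0) :=
  funext fun p => px_eq_fderiv (hf p)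

theorem uncurry_pt (hf : Differentiable ℝ (uncurry f)) :
    uncurry (pt f) = fun p => fderiv ℝ (uncurry f) p (0, 1) :=
  funext fun p => pt_eq_fderiv (hf p)

theorem contDiff_uncurry_px {n : WithTop ℕ∞} (hf : ContDiff ℝ (n + 1) (uncurry f)) :
    ContDiff ℝ n (uncurry (px f)) := by
  rw [uncurry_px (hf.differentiable (by simp))]
  exact (hf.fderiv_right le_rfl).clm_apply contDiff_const

theorem contDiff_uncurry_pt {n : WithTop ℕ∞} (hf : ContDiff ℝ (n + 1) (uncurry f)) :
    ContDiff ℝ n (uncurry (pt f)) := by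
  rw [uncurry_pt (hf.differentiable (by simp))]
  exact (hf.fderiv_right le_rfl).clm_apply contDiff_const

theorem pt_px_eq_px_pt (hf : ContDiff ℝ 2 (uncurry f)) :
    pt (px f) x t = px (pt f) x t := by
  have hd : Differentiable ℝ (uncurry f) := hf.differentiable (by simp)
  have hd' : Differentiable ℝ (fderiv ℝ (uncurry f)) :=
    (hf.fderiv_right (m := 1) (by norm_num)).differentiable (by simp)
  have hx : ContDiff ℝ 1 (uncurry (px f)) := contDiff_uncurry_px hf
  have ht : ContDiff ℝ 1 (uncurry (pt f)) := contDiff_uncurry_pt hf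
  rw [pt_eq_fderiv (hx.differentiable (by simp) _), px_eq_fderiv (ht.differentiable (by simp) _),
    uncurry_px hd, uncurry_pt hd, fderiv_apply_const_apply (hd' _),
    fderiv_apply_const_apply (hd' _)]
  exact (hf.contDiffAt.isSymmSndFDerivAt (by simp)).eq _ _

end PartialDerivatives

section Backlund

variable {a : ℝ} {u v : ℝ → ℝ → ℝ}

theorem pt_px_add_eq_of_backlund (ha : a ≠ 0) (hu : ContDiff ℝ 2 (uncurry u))
    (hv : ContDiff ℝ 2 (uncurry v))
    (hBT1 : ∀ x t, (px u x t + px v x t) / 2 = a * sin ((u x t - v x t) / 2))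
    (hBT2 : ∀ x t, (pt u x t - pt v x t) / 2 = (1 / a) * sin ((u x t + v x t) / 2)) (x t : ℝ) :
    (pt (px u) x t + pt (px v) x t) / 2 =
      cos ((u x t - v x t) / 2) * sin ((u x t + v x t) / 2) := by
  have hlhs : HasDerivAt (fun t' => (px u x t' + px v x t') / 2)
      ((pt (px u) x t + pt (px v) x t) / 2) t :=
    ((hasDerivAt_pt ((contDiff_uncurry_px hu).differentiable one_ne_zero _)).add
      (hasDerivAt_pt ((contDiff_uncurry_px hv).differentiable one_ne_zero _))).div_const 2
  have hrhs : HasDerivAt (fun t' => a * sin ((u x t' - v x t') / 2))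
      (a * (cos ((u x t - v x t) / 2) * ((pt u x t - pt v x t) / 2))) t :=
    (((hasDerivAt_pt (hu.differentiable two_ne_zero _)).sub
      (hasDerivAt_pt (hv.differentiable two_ne_zero _))).div_const 2).sin.const_mul a
  rw [funext (hBT1 x)] at hlhs
  rw [hlhs.unique hrhs, hBT2]
  field_simp

theorem px_pt_sub_eq_of_backlund (ha : a ≠ 0) (hu : ContDiff ℝ 2 (uncurry u))
    (hv : ContDiff ℝ 2 (uncurry v))
    (hBT1 : ∀ x t, (px u x t + px v x t) / 2 = a * sin ((u x t - v x t) / 2))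
    (hBT2 : ∀ x t, (pt u x t - pt v x t) / 2 = (1 / a) * sin ((u x t + v x t) / 2)) (x t : ℝ) :
    (px (pt u) x t - px (pt v) x t) / 2 =
      cos ((u x t + v x t) / 2) * sin ((u x t - v x t) / 2) := by
  have hlhs : HasDerivAt (fun x' => (pt u x' t - pt v x' t) / 2)
      ((px (pt u) x t - px (pt v) x t) / 2) x :=
    ((hasDerivAt_px ((contDiff_uncurry_pt hu).differentiable one_ne_zero _)).sub
      (hasDerivAt_px ((contDiff_uncurry_pt hv).differentiable one_ne_zero _))).div_const 2
  have hrhs : HasDerivAt (fun x' => (1 / a) * sin ((u x' t + v x' t) / 2))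
      ((1 / a) * (cos ((u x t + v x t) / 2) * ((px u x t + px v x t) / 2))) x :=
    (((hasDerivAt_px (hu.differentiable two_ne_zero _)).add
      (hasDerivAt_px (hv.differentiable two_ne_zero _))).div_const 2).sin.const_mul (1 / a)
  rw [funext fun x' => hBT2 x' t] at hlhs
  rw [hlhs.unique hrhs, hBT1]
  field_simp

end Backlund

theorem stmt_8 (a : ℝ) (ha : a ≠ 0) (u v : ℝ → ℝ → ℝ)
    (hu : ContDiff ℝ 2 (Function.uncurry u))
    (hv : ContDiff ℝ 2 (Function.uncurry v))
    (hBT1 : ∀ x t, (px u x t + px v x t) / 2 = a * Real.sin ((u x t - v x t) / 2))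
    (hBT2 : ∀ x t, (pt u x t - pt v x t) / 2 = (1 / a) * Real.sin ((u x t + v x t) / 2)) :
    ∀ x t, pt (px u) x t = Real.sin (u x t) := by
  intro x t
  have hadd := pt_px_add_eq_of_backlund ha hu hv hBT1 hBT2 x t
  have hsub := px_pt_sub_eq_of_backlund ha hu hv hBT1 hBT2 x t
  rw [← pt_px_eq_px_pt hu, ← pt_px_eq_px_pt hv] at hsub
  calc pt (px u) x t
      = (pt (px u) x t + pt (px v) x t) / 2 + (pt (px u) x t - pt (px v) x t) / 2 := by ring
    _ = sin ((u x t + v x t) / 2 + (u x t - v x t) / 2) := by rw [hadd, hsub, sin_add]; ring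
    _ = sin (u x t) := by ring_nf
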